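/- Let π be a probability density on ℝ³ and consider the transition kernel K(θ' | θ) obtained by updating coordinates (θ_1, θ_2, θ_3) sequentially from their full conditionals under π in a uniformly random order over all 3! = 6 permutations (each with probability 1/6). Then K satisfies detailed balance with respect to π: K(θ' | θ)π(θ) = K(θ | θ')π(θ'). -/
import Mathlib


open MeasureTheory

/-- Full conditional density of coordinate 1 under `π`. -/
noncomputable def fc1 (π : ℝ × ℝ × ℝ → ℝ) (x y z : ℝ) : ℝ :=
  π (x, y, z) / ∫ t : ℝ, π (t, y, z)

/-- Full conditional density of coordinate 2 under `π`. -/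
noncomputable def fc2 (π : ℝ × ℝ × ℝ → ℝ) (y x z : ℝ) : ℝ :=
  π (x, y, z) / ∫ t : ℝ, π (x, t, z)

/-- Full conditional density of coordinate 3 under `π`. -/
noncomputable def fc3 (π : ℝ × ℝ × ℝ → ℝ) (z x y : ℝ) : ℝ :=
  π (x, y, z) / ∫ t : ℝ, π (x, y, t)

/-- Kernel of the Gibbs sampler updating the three coordinates sequentially from their
full conditionals, in a uniformly random order over the 3! = 6 permutations. -/
noncomputable def gibbsKernel3 (π : ℝ × ℝ × ℝ → ℝ) (θ θ' : ℝ × ℝ × ℝ) : ℝ :=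
  let x := θ.1; let y := θ.2.1; let z := θ.2.2
  let x' := θ'.1; let y' := θ'.2.1; let z' := θ'.2.2
  1 / 6 * (fc1 π x' y z * fc2 π y' x' z * fc3 π z' x' y')
    + 1 / 6 * (fc1 π x' y z * fc3 π z' x' y * fc2 π y' x' z')
    + 1 / 6 * (fc2 π y' x z * fc1 π x' y' z * fc3 π z' x' y')
    + 1 / 6 * (fc2 π y' x z * fc3 π z' x y' * fc1 π x' y' z')
    + 1 / 6 * (fc3 π z' x y * fc1 π x' y z' * fc2 π y' x' z')
    + 1 / 6 * (fc3 π z' x y * fc2 π y' x z' * fc1 π x' y' z')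

theorem random_order_gibbs_three_detailed_balance
    (π : ℝ × ℝ × ℝ → ℝ) (hpos : ∀ θ, 0 < π θ)
    (hInt : Integrable π (volume : Measure (ℝ × ℝ × ℝ)))
    (hOne : ∫ θ, π θ = 1) :
    ∀ θ θ' : ℝ × ℝ × ℝ, gibbsKernel3 π θ θ' * π θ = gibbsKernel3 π θ' θ * π θ' := by
  rintro ⟨x, y, z⟩ ⟨x', y', z'⟩
  simp only [gibbsKernel3, fc1, fc2, fc3]
  ring
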